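/- arXiv:1209.6152 — 2 statements merged into one kernel-verified Lean document; each statement's English description precedes it below -/
import Mathlib

section
/- In the array code produced by spreading balanced 2-parity groups of size k over n disks via a 3-(n,k,λ) design, if one disk fails, then exactly λ₂·τ₁ entries must be read from each surviving disk, where λ₂ = λ(n−2)/(k−2) and τ₁ is the per-column read cost for single-column recovery of the parity group; in particular this count is the same for every surviving disk. -/
lemma swap_sum {X : Type*} [DecidableEq X] (F : Multiset (Finset X)) (S : Finset X) :
    ∑ z ∈ S, (F.filter (fun b => z ∈ b)).card = (F.map (fun b => (S ∩ b).card)).sum := by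
  induction F using Multiset.induction with
  | empty => simp
  | cons a F ih =>
      simp only [Multiset.map_cons, Multiset.sum_cons, ← ih]
      have step : ∀ z ∈ S, (Multiset.filter (fun b => z ∈ b) (a ::ₘ F)).card
          = (if z ∈ a then 1 else 0) + (Multiset.filter (fun b => z ∈ b) F).card := by
        intro z _
        rw [Multiset.filter_cons]
        split <;> simp [add_comm]
      rw [Finset.sum_congr rfl step, Finset.sum_add_distrib]
      congr 1
      rw [← Finset.filter_mem_eq_inter, Finset.card_filter]

/-- If one disk y fails, the number of entries read from any surviving disk x,
namely τ₁ times the number of blocks containing both x and y, equals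
λ₂·τ₁ with λ₂ = λ(n−2)/(k−2); in particular it is the same for every
surviving disk. -/
theorem stmt_9 {X : Type*} [Fintype X] [DecidableEq X]
    (n k lam tau1 : ℕ) (hk : 3 ≤ k) (hkn : k ≤ n)
    (hX : Fintype.card X = n)
    (B : Multiset (Finset X))
    (hblocks : ∀ b ∈ B, b.card = k)
    (hdesign : ∀ T : Finset X, T.card = 3 →
      (B.filter (fun b => T ⊆ b)).card = lam)
    (y : X) :
    ∀ x : X, x ≠ y →
      ((tau1 : ℚ) * ((B.filter (fun b => x ∈ b ∧ y ∈ b)).card : ℚ) =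
        ((lam : ℚ) * ((n : ℚ) - 2) / ((k : ℚ) - 2)) * (tau1 : ℚ)) := by
  intro x hxy
  set F : Multiset (Finset X) := B.filter (fun b => x ∈ b ∧ y ∈ b) with hF
  set S : Finset X := Finset.univ \ {x, y} with hS
  have hScard : S.card = n - 2 := by
    rw [hS, Finset.card_sdiff_of_subset (by simp), Finset.card_univ, hX, Finset.card_pair hxy]
  -- left side of double counting
  have h1 : ∑ z ∈ S, (F.filter (fun b => z ∈ b)).card = (n - 2) * lam := by
    rw [Finset.sum_congr rfl (fun z hz => ?_), Finset.sum_const, hScard, smul_eq_mul]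
    have hzx : z ≠ x := by rintro rfl; simp [hS] at hz
    have hzy : z ≠ y := by rintro rfl; simp [hS] at hz
    have hT : ({x, y, z} : Finset X).card = 3 := by
      rw [Finset.card_insert_of_notMem (by simp [hxy, hzx.symm]),
        Finset.card_insert_of_notMem (by simp [hzy.symm]), Finset.card_singleton]
    rw [← hdesign {x, y, z} hT, hF, Multiset.filter_filter]
    congr 1
    apply Multiset.filter_congr
    intro b _
    simp only [Finset.insert_subset_iff, Finset.singleton_subset_iff]
    tauto
  -- right side
  have h2 : ∑ z ∈ S, (F.filter (fun b => z ∈ b)).card = F.card * (k - 2) := by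
    rw [swap_sum]
    have : F.map (fun b => (S ∩ b).card) = F.map (fun _ => k - 2) := by
      apply Multiset.map_congr rfl
      intro b hb
      have hbB : b ∈ B := Multiset.mem_of_mem_filter hb
      have hxb : x ∈ b ∧ y ∈ b := by
        have := Multiset.of_mem_filter hb
        simpa using this
      have : S ∩ b = b \ {x, y} := by
        ext z
        simp only [hS, Finset.mem_inter, Finset.mem_sdiff, Finset.mem_univ, true_and]
        tauto
      rw [this, Finset.card_sdiff_of_subset (by simp [Finset.insert_subset_iff, hxb.1, hxb.2]),
        hblocks b hbB, Finset.card_pair hxy]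
    rw [this, Multiset.map_const', Multiset.sum_replicate, smul_eq_mul]
  have key : F.card * (k - 2) = (n - 2) * lam := by rw [← h2, h1]
  -- cast to ℚ
  have hk2 : (2 : ℕ) ≤ k := by omega
  have hn2 : (2 : ℕ) ≤ n := by omega
  have keyQ : (F.card : ℚ) * ((k : ℚ) - 2) = ((n : ℚ) - 2) * lam := by
    have := congrArg (fun m : ℕ => (m : ℚ)) key
    push_cast [Nat.cast_sub hk2, Nat.cast_sub hn2] at this
    convert this using 2 <;> push_cast [Nat.cast_sub hk2, Nat.cast_sub hn2] <;> ring
  have hkne : ((k : ℚ) - 2) ≠ 0 := by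
    have : (3 : ℚ) ≤ (k : ℚ) := by exact_mod_cast hk
    linarith
  have hm : (F.card : ℚ) = (lam : ℚ) * ((n : ℚ) - 2) / ((k : ℚ) - 2) := by
    field_simp
    linarith [keyQ]
  rw [hm]; ring
end

section
/- In the array code produced via a 3-(n,k,λ) design from balanced 2-parity groups, if two disks y and z fail, then the number of entries read from any surviving disk x equals λ·τ₂ + 2·λ₂^{(1)}·τ₁, where λ₂^{(1)} = λ(n−k)/(k−2); in particular, the reconstruction workload is identical on all surviving disks. -/
lemma exch {α β : Type*} (B : Multiset α) (S : Finset β) (g : α → β → ℕ) :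
    (B.map (fun b => ∑ w ∈ S, g b w)).sum = ∑ w ∈ S, (B.map (fun b => g b w)).sum := by
  induction B using Multiset.induction with
  | empty => simp
  | cons a s ih => simp [ih, Finset.sum_add_distrib]

lemma ifsum {α : Type*} (B : Multiset α) (p : α → Prop) [DecidablePred p] (c : ℕ) :
    (B.map (fun b => if p b then c else 0)).sum = (B.filter p).card * c := by
  induction B using Multiset.induction with
  | empty => simp
  | cons a s ih =>
    by_cases h : p a <;> simp [h, ih, Multiset.filter_cons, add_mul] <;> ring

lemma csplit {α : Type*} (B : Multiset α) (p q : α → Prop) [DecidablePred p] [DecidablePred q] :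
    (B.filter (fun b => p b ∧ q b)).card + (B.filter (fun b => p b ∧ ¬ q b)).card
      = (B.filter p).card := by
  induction B using Multiset.induction with
  | empty => simp
  | cons a s ih =>
    by_cases hp : p a <;> by_cases hq : q a <;>
      simp [Multiset.filter_cons, hp, hq, ← ih] <;> omega

lemma pair_count {X : Type*} [Fintype X] [DecidableEq X]
    (n k lam : ℕ) (hk : 3 ≤ k) (hX : Fintype.card X = n)
    (B : Multiset (Finset X))
    (hblocks : ∀ b ∈ B, b.card = k)
    (hdesign : ∀ T : Finset X, T.card = 3 →
      (B.filter (fun b => T ⊆ b)).card = lam)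
    (x y : X) (hxy : x ≠ y) :
    (B.filter (fun b => x ∈ b ∧ y ∈ b)).card * (k - 2) = lam * (n - 2) := by
  classical
  set S : Finset X := Finset.univ \ {x, y} with hS
  have hScard : S.card = n - 2 := by
    rw [hS, Finset.card_sdiff_of_subset (by simp)]
    simp [Finset.card_insert_of_notMem, hxy, hX]
  have h1 : ∀ w ∈ S, (B.filter (fun b => x ∈ b ∧ y ∈ b ∧ w ∈ b)).card = lam := by
    intro w hw
    have hwx : w ≠ x := by simp [hS] at hw; tauto
    have hwy : w ≠ y := by simp [hS] at hw; tauto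
    have hT : ({x, y, w} : Finset X).card = 3 :=
      Finset.card_eq_three.mpr ⟨x, y, w, hxy, hwx.symm, hwy.symm, rfl⟩
    have := hdesign {x, y, w} hT
    rw [← this]
    congr 1
    apply Multiset.filter_congr
    intro b _
    simp [Finset.insert_subset_iff, and_assoc]
  have hsum1 : ∑ w ∈ S, (B.filter (fun b => x ∈ b ∧ y ∈ b ∧ w ∈ b)).card = lam * (n - 2) := by
    rw [Finset.sum_congr rfl h1]
    simp [hScard, mul_comm]
  have h2 : ∀ w : X, (B.filter (fun b => x ∈ b ∧ y ∈ b ∧ w ∈ b)).card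
      = (B.map (fun b => if x ∈ b ∧ y ∈ b ∧ w ∈ b then 1 else 0)).sum := by
    intro w
    rw [ifsum B (fun b => x ∈ b ∧ y ∈ b ∧ w ∈ b) 1, mul_one]
  rw [Finset.sum_congr rfl (fun w _ => h2 w), ← exch] at hsum1
  have h3 : ∀ b ∈ B, (∑ w ∈ S, if x ∈ b ∧ y ∈ b ∧ w ∈ b then 1 else 0)
      = if x ∈ b ∧ y ∈ b then k - 2 else 0 := by
    intro b hb
    by_cases hxb : x ∈ b ∧ y ∈ b
    · have heq : ∀ w ∈ S, (if x ∈ b ∧ y ∈ b ∧ w ∈ b then 1 else 0)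
          = if w ∈ b then 1 else 0 := by
        intro w _; by_cases h : w ∈ b <;> simp [h, hxb.1, hxb.2]
      rw [Finset.sum_congr rfl heq, Finset.sum_boole]
      have : S.filter (· ∈ b) = b \ {x, y} := by
        ext w; simp [hS, Finset.mem_sdiff, and_comm]
      rw [if_pos hxb]
      have hsub : ({x, y} : Finset X) ⊆ b := by
        simp [Finset.insert_subset_iff, hxb.1, hxb.2]
      have hcard2 : ({x, y} : Finset X).card = 2 := by
        simp [Finset.card_insert_of_notMem, hxy]
      simp [this, Finset.card_sdiff_of_subset hsub, hcard2, hblocks b hb]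
    · have : ∀ w ∈ S, (if x ∈ b ∧ y ∈ b ∧ w ∈ b then 1 else 0) = 0 := by
        intro w _; rw [if_neg]; tauto
      rw [Finset.sum_congr rfl this, if_neg hxb]
      simp
  rw [Multiset.map_congr rfl h3, ifsum] at hsum1
  exact hsum1

/-- If two disks y, z fail, the number of entries read from any surviving disk
x (τ₂ per block containing x,y,z, plus τ₁ per block containing x,y but not z,
plus τ₁ per block containing x,z but not y) equals λ·τ₂ + 2·λ₂⁽¹⁾·τ₁ with
λ₂⁽¹⁾ = λ(n−k)/(k−2); in particular the workload is identical on all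
surviving disks. -/
theorem stmt_10 {X : Type*} [Fintype X] [DecidableEq X]
    (n k lam tau1 tau2 : ℕ) (hk : 3 ≤ k) (hkn : k < n)
    (hX : Fintype.card X = n)
    (B : Multiset (Finset X))
    (hblocks : ∀ b ∈ B, b.card = k)
    (hdesign : ∀ T : Finset X, T.card = 3 →
      (B.filter (fun b => T ⊆ b)).card = lam)
    (y z : X) (hyz : y ≠ z) :
    ∀ x : X, x ≠ y → x ≠ z →
      ((tau2 : ℚ) * ((B.filter (fun b => x ∈ b ∧ y ∈ b ∧ z ∈ b)).card : ℚ) +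
       (tau1 : ℚ) * ((B.filter (fun b => x ∈ b ∧ y ∈ b ∧ z ∉ b)).card : ℚ) +
       (tau1 : ℚ) * ((B.filter (fun b => x ∈ b ∧ z ∈ b ∧ y ∉ b)).card : ℚ) =
        (lam : ℚ) * (tau2 : ℚ) +
          2 * ((lam : ℚ) * ((n : ℚ) - (k : ℚ)) / ((k : ℚ) - 2)) * (tau1 : ℚ)) := by
  intro x hxy hxz
  classical
  -- triple count
  have hT : ({x, y, z} : Finset X).card = 3 :=
    Finset.card_eq_three.mpr ⟨x, y, z, hxy, hxz, hyz, rfl⟩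
  have htriple : (B.filter (fun b => x ∈ b ∧ y ∈ b ∧ z ∈ b)).card = lam := by
    rw [← hdesign {x, y, z} hT]
    congr 1
    exact (Multiset.filter_congr fun b _ => by
      simp [Finset.insert_subset_iff, and_assoc]).symm
  have htriple' : (B.filter (fun b => x ∈ b ∧ z ∈ b ∧ y ∈ b)).card = lam := by
    rw [← htriple]; congr 1
    exact Multiset.filter_congr fun b _ => by tauto
  -- pair counts
  have hxy' := pair_count n k lam hk hX B hblocks hdesign x y hxy
  have hxz' := pair_count n k lam hk hX B hblocks hdesign x z hxz
  -- splits
  have hs1 := csplit B (fun b => x ∈ b ∧ y ∈ b) (fun b => z ∈ b)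
  have hs2 := csplit B (fun b => x ∈ b ∧ z ∈ b) (fun b => y ∈ b)
  simp only [and_assoc] at hs1 hs2
  set A := (B.filter (fun b => x ∈ b ∧ y ∈ b ∧ z ∈ b)).card with hA
  set C := (B.filter (fun b => x ∈ b ∧ y ∈ b ∧ z ∉ b)).card with hC
  set D := (B.filter (fun b => x ∈ b ∧ z ∈ b ∧ y ∉ b)).card with hD
  have hC' : (C + lam) * (k - 2) = lam * (n - 2) := by
    rw [← hxy', ← hs1, htriple]; ring_nf
  have hD' : (D + lam) * (k - 2) = lam * (n - 2) := by
    rw [← hxz', ← hs2, htriple']; ring_nf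
  -- move to ℚ
  have h2k : 2 ≤ k := by omega
  have h2n : 2 ≤ n := by omega
  have hkn' : k ≤ n := le_of_lt hkn
  have hCq : ((C : ℚ) + lam) * ((k : ℚ) - 2) = (lam : ℚ) * ((n : ℚ) - 2) := by
    have := congrArg (Nat.cast : ℕ → ℚ) hC'
    push_cast [Nat.cast_sub h2k, Nat.cast_sub h2n] at this
    convert this using 2 <;> push_cast <;> ring
  have hDq : ((D : ℚ) + lam) * ((k : ℚ) - 2) = (lam : ℚ) * ((n : ℚ) - 2) := by
    have := congrArg (Nat.cast : ℕ → ℚ) hD'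
    push_cast [Nat.cast_sub h2k, Nat.cast_sub h2n] at this
    convert this using 2 <;> push_cast <;> ring
  have hkne : (k : ℚ) - 2 ≠ 0 := by
    have : (2 : ℚ) < k := by exact_mod_cast (by omega : 2 < k)
    linarith
  rw [htriple]
  field_simp
  nlinarith [hCq, hDq]
end
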